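/- Let w be a word having s Abelian periods (h₁,p₁) < (h₂,p₂) < ⋯ < (h_s,p_s) (in the order: (h,p) < (h',p') iff p < p' or (p = p' and h < h')) all with the same positive tail length t, i.e., (|w| - h_i) mod p_i = t > 0 for all i. Then for any letter a, if (h₁,p₁) is an Abelian period of wa, then (h₂,p₂), …, (h_s,p_s) are also Abelian periods of wa. -/

import Mathlib

/-!
All Abelian periods `(hᵢ, pᵢ)` of `w` with tail length `t` share the tail: the suffix `z` of `w`
of length `t`; the last full block of `(hᵢ, pᵢ)` is the factor of length `pᵢ` of `w` ending just
before `z`. Appending `a` keeps `(h, p)` a period as soon as the Parikh vector of `z a` is contained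
in that of this block (when `|z a| = p`, the word `z a` becomes a new full block). As `(h₁, p₁)` is
a period of `w a`, the Parikh vector of `z a` is contained in that of the factor of length `p₁`
before `z`, which is a suffix of the factor of length `pᵢ ≥ p₁` before `z`.
-/

/-- A word `w` has Abelian period `(h, p)` if `w = u₀u₁⋯u_{k-1}u_k` where `|u₀| = h`,
all the middle blocks `u₁, …, u_{k-1}` have length `p` and the same Parikh vector,
the Parikh vectors of the head `u₀` and the tail `u_k` are contained in that common
Parikh vector, `h < p`, there is at least one middle block, and the tail has length
`< p`. -/
def HasAbelianPeriod {α : Type*} [DecidableEq α] (w : List α) (h p : ℕ) : Prop :=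
  h < p ∧ ∃ (u0 : List α) (us : List (List α)) (uk : List α),
    w = u0 ++ us.flatten ++ uk ∧
    u0.length = h ∧
    us ≠ [] ∧
    (∀ u ∈ us, u.length = p) ∧
    (∀ u ∈ us, ∀ v ∈ us, ∀ a : α, u.count a = v.count a) ∧
    (∀ u ∈ us, ∀ a : α, u0.count a ≤ u.count a) ∧
    (∀ u ∈ us, ∀ a : α, uk.count a ≤ u.count a) ∧
    uk.length < p

section

variable {α : Type*}

namespace List

theorem length_flatten_of_forall_length_eq {us : List (List α)} {p : ℕ}
    (hlen : ∀ u ∈ us, u.length = p) : us.flatten.length = us.length * p := by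
  rw [length_flatten, map_congr_left hlen, map_const', sum_replicate, smul_eq_mul]

theorem IsSuffix.of_append_of_length_le {C B z w : List α} (hC : C ++ z <:+ w)
    (hB : B ++ z <:+ w) (hlen : C.length ≤ B.length) : C <:+ B :=
  suffix_append_self_iff.mp (suffix_of_suffix_length_le hC hB (by simpa using hlen))

theorem count_eq_of_forall_count_le_of_length_eq [DecidableEq α] {l₁ l₂ : List α}
    (hle : ∀ c, l₁.count c ≤ l₂.count c) (hlen : l₁.length = l₂.length) (c : α) :
    l₁.count c = l₂.count c :=
  ((subperm_ext_iff.mpr fun x _ => hle x).perm_of_length_le hlen.ge).count_eq c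

end List

open List

theorem length_tail_eq_mod {u0 uk : List α} {us : List (List α)} {p : ℕ}
    (hlen : ∀ u ∈ us, u.length = p) (huk : uk.length < p) :
    uk.length = ((u0 ++ us.flatten ++ uk).length - u0.length) % p := by
  simp only [length_append, length_flatten_of_forall_length_eq hlen]
  rw [Nat.add_assoc, Nat.add_sub_cancel_left, Nat.mul_add_mod_self_right, Nat.mod_eq_of_lt huk]

theorem tail_eq_of_suffix {w z u0 uk : List α} {us : List (List α)} {p : ℕ}
    (hw : w = u0 ++ us.flatten ++ uk) (hlen : ∀ u ∈ us, u.length = p) (huk : uk.length < p)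
    (hz : z <:+ w) (hzlen : z.length = (w.length - u0.length) % p) : uk = z := by
  have hlen_eq : uk.length = z.length := by rw [hzlen, hw]; exact length_tail_eq_mod hlen huk
  exact (suffix_of_suffix_length_le (hw ▸ suffix_append _ _) hz hlen_eq.le).eq_of_length hlen_eq

section AbelianPeriod

variable [DecidableEq α]

theorem HasAbelianPeriod.add_le_length {w : List α} {h p : ℕ} (hw : HasAbelianPeriod w h p) :
    h + p ≤ w.length := by
  obtain ⟨-, u0, us, uk, rfl, rfl, hus, hlen, -⟩ := hw
  have hblocks : 1 ≤ us.length := length_pos_iff.mpr hus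
  simp only [length_append, length_flatten_of_forall_length_eq hlen]
  nlinarith

theorem hasAbelianPeriod_append_of_length_le {u0 v : List α} {us : List (List α)} {p : ℕ}
    (hp : u0.length < p) (hus : us ≠ []) (hlen : ∀ u ∈ us, u.length = p)
    (heq : ∀ u ∈ us, ∀ u' ∈ us, ∀ c, u.count c = u'.count c)
    (hhead : ∀ u ∈ us, ∀ c, u0.count c ≤ u.count c)
    (hv : ∀ u ∈ us, ∀ c, v.count c ≤ u.count c) (hvp : v.length ≤ p) :
    HasAbelianPeriod (u0 ++ us.flatten ++ v) u0.length p := by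
  rcases hvp.lt_or_eq with hvp | hvp
  · exact ⟨hp, u0, us, v, rfl, rfl, hus, hlen, heq, hhead, hv, hvp⟩
  obtain ⟨B, hB⟩ := exists_mem_of_ne_nil us hus
  have hblock : ∀ u ∈ us ++ [v], ∀ c, u.count c = B.count c := by
    intro u hu c
    rcases mem_append.mp hu with hu | hu
    · exact heq u hu B hB c
    · rw [mem_singleton.mp hu]
      exact count_eq_of_forall_count_le_of_length_eq (hv B hB) (hvp.trans (hlen B hB).symm) c
  refine ⟨hp, u0, us ++ [v], [], by simp, rfl, by simp, ?_, ?_, ?_, by simp, Nat.zero_lt_of_lt hp⟩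
  · intro u hu
    rcases mem_append.mp hu with hu | hu
    · exact hlen u hu
    · rw [mem_singleton.mp hu, hvp]
  · intro u hu u' hu' c
    rw [hblock u hu c, hblock u' hu' c]
  · intro u hu c
    rw [hblock u hu c]
    exact hhead B hB c

theorem HasAbelianPeriod.append_singleton {w z C : List α} {h p : ℕ} {a : α}
    (hw : HasAbelianPeriod w h p) (hz : z <:+ w) (hzlen : z.length = (w.length - h) % p)
    (hC : C ++ z <:+ w) (hCp : C.length ≤ p) (hcount : ∀ c, (z ++ [a]).count c ≤ C.count c) :
    HasAbelianPeriod (w ++ [a]) h p := by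
  obtain ⟨hhp, u0, us, uk, hw, rfl, hus, hlen, heq, hhead, -, huk⟩ := hw
  obtain ⟨l, B, rfl⟩ := (eq_nil_or_concat' us).resolve_left hus
  have hB : B ∈ l ++ [B] := mem_append_right l (mem_singleton_self B)
  obtain rfl := tail_eq_of_suffix hw hlen huk hz hzlen
  have hCB : C <:+ B :=
    hC.of_append_of_length_le ⟨u0 ++ l.flatten, by simp [hw]⟩ (hCp.trans (hlen B hB).ge)
  subst hw
  simpa using hasAbelianPeriod_append_of_length_le hhp hus hlen heq hhead
    (fun u hu c => (hcount c).trans ((hCB.count_le c).trans (heq B hB u hu c).le))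
    (by simpa using huk)

theorem HasAbelianPeriod.exists_block_of_append_singleton {w z : List α} {h p : ℕ} {a : α}
    (hwa : HasAbelianPeriod (w ++ [a]) h p) (hhp : h + p ≤ w.length) (hz : z <:+ w)
    (hzlen : z.length = (w.length - h) % p) :
    ∃ C : List α, C.length = p ∧ C ++ z <:+ w ∧ ∀ c, (z ++ [a]).count c ≤ C.count c := by
  obtain ⟨hp, v0, vs, vk, hwa, rfl, hvs, hlen, heq, -, htail, hvk⟩ := hwa
  obtain ⟨m, D, rfl⟩ := (eq_nil_or_concat' vs).resolve_left hvs
  have hD : D ∈ m ++ [D] := mem_append_right m (mem_singleton_self D)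
  rcases eq_nil_or_concat' vk with rfl | ⟨vk, b, rfl⟩
  · -- `a` completes the last block `D`, so the block before `D` is the witness
    obtain ⟨D, b, rfl⟩ := (eq_nil_or_concat' D).resolve_left
      (ne_nil_of_length_pos ((hlen _ hD).symm ▸ Nat.zero_lt_of_lt hp))
    obtain ⟨hw, rfl⟩ := append_singleton_inj.mp (by simpa [← append_assoc] using hwa)
    have hDp : D.length < p := by have := hlen _ hD; rw [length_append, length_singleton] at this; omega
    obtain rfl := tail_eq_of_suffix hw (fun u hu => hlen u (mem_append_left _ hu)) hDp hz hzlen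
    obtain ⟨m, C, rfl⟩ := (eq_nil_or_concat' m).resolve_left <| by
      rintro rfl
      simp only [hw, flatten_nil, append_nil, length_append, add_le_add_iff_left] at hhp
      omega
    exact ⟨C, hlen C (by simp), ⟨v0 ++ m.flatten, by simp [hw]⟩,
      fun c => (heq _ hD C (by simp) c).le⟩
  · obtain ⟨hw, rfl⟩ := append_singleton_inj.mp (hwa.trans (append_assoc _ _ _).symm)
    obtain rfl := tail_eq_of_suffix hw hlen (by rw [length_append, length_singleton] at hvk; omega) hz hzlen
    exact ⟨D, hlen D hD, ⟨v0 ++ m.flatten, by simp [hw]⟩, htail D hD⟩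

end AbelianPeriod

end

theorem heap_proposition_general {α : Type*} [DecidableEq α]
    (w : List α) (s t : ℕ) (hs : 0 < s)
    (hseq pseq : Fin s → ℕ)
    (horder : ∀ i j : Fin s, i < j →
      pseq i < pseq j ∨ (pseq i = pseq j ∧ hseq i < hseq j))
    (hper : ∀ i : Fin s, HasAbelianPeriod w (hseq i) (pseq i))
    (htail : ∀ i : Fin s, (w.length - hseq i) % pseq i = t)
    (a : α)
    (hfirst : HasAbelianPeriod (w ++ [a]) (hseq ⟨0, hs⟩) (pseq ⟨0, hs⟩)) :
    ∀ i : Fin s, HasAbelianPeriod (w ++ [a]) (hseq i) (pseq i) := by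
  intro i
  set i₀ : Fin s := ⟨0, hs⟩
  have hp : pseq i₀ ≤ pseq i := by
    rcases (show i₀ ≤ i from Nat.zero_le _).eq_or_lt with rfl | hlt
    · exact le_rfl
    · rcases horder i₀ i hlt with hlt | ⟨heq, -⟩ <;> omega
  have ht : t ≤ w.length := htail i₀ ▸ (Nat.mod_le _ _).trans (Nat.sub_le _ _)
  set z := w.drop (w.length - t)
  have hz : z <:+ w := List.drop_suffix _ _
  have hzlen (j : Fin s) : z.length = (w.length - hseq j) % pseq j := by
    rw [htail j, List.length_drop]
    omega
  obtain ⟨C, hCp, hC, hcount⟩ :=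
    hfirst.exists_block_of_append_singleton (hper i₀).add_le_length hz (hzlen i₀)
  exact (hper i).append_singleton hz (hzlen i) hC (hCp ▸ hp) hcount

/-- Let `w` have `s` Abelian periods `(h₁,p₁) < (h₂,p₂) < ⋯ < (h_s,p_s)`
(in the order `(h,p) < (h',p')` iff `p < p'` or (`p = p'` and `h < h'`)), all with the
same positive tail length `t`, i.e. `(|w| - hᵢ) % pᵢ = t > 0` for all `i`. Then for any
letter `a`, if `(h₁,p₁)` is an Abelian period of `w·a`, then every `(hᵢ,pᵢ)` is an
Abelian period of `w·a`. -/
theorem heap_proposition {α : Type*} [DecidableEq α]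
    (w : List α) (s t : ℕ) (hs : 0 < s)
    (hseq pseq : Fin s → ℕ)
    (horder : ∀ i j : Fin s, i < j →
      pseq i < pseq j ∨ (pseq i = pseq j ∧ hseq i < hseq j))
    (hper : ∀ i : Fin s, HasAbelianPeriod w (hseq i) (pseq i))
    (ht : 0 < t)
    (htail : ∀ i : Fin s, (w.length - hseq i) % pseq i = t)
    (a : α)
    (hfirst : HasAbelianPeriod (w ++ [a]) (hseq ⟨0, hs⟩) (pseq ⟨0, hs⟩)) :
    ∀ i : Fin s, HasAbelianPeriod (w ++ [a]) (hseq i) (pseq i) :=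
  heap_proposition_general w s t hs hseq pseq horder hper htail a hfirst
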